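/- arXiv:2104.05598 — 9 statements merged into one kernel-verified Lean document; each statement's English description precedes it below -/
import Mathlib

section
/- The operation * on F_p × F_p defined by (x1,x2)*(y1,y2) = (a3(a8 b2 - b7)/(a8 b7) + a3 x2 + a8 b2 y1/b7 + a8 x2 y1, -b2(a8 - a3 b7)/(a8 b7) + a3 b7 y2/a8 + b2 x1 + b7 x1 y2) is entropic: for all x, y, z, w in F_p × F_p, (x*y)*(z*w) = (x*z)*(y*w). -/
/-- The entropoid multiplication on `F_p × F_p`. -/
def emul {p : ℕ} [Fact p.Prime] (a3 a8 b2 b7 : ZMod p)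
    (x y : ZMod p × ZMod p) : ZMod p × ZMod p :=
  (a3 * (a8 * b2 - b7) / (a8 * b7) + a3 * x.2 + a8 * b2 * y.1 / b7 + a8 * x.2 * y.1,
   -(b2 * (a8 - a3 * b7)) / (a8 * b7) + a3 * b7 * y.2 / a8 + b2 * x.1 + b7 * x.1 * y.2)

theorem entropoid_mul_entropic {p : ℕ} [Fact p.Prime] (a3 a8 b2 b7 : ZMod p)
    (ha8 : a8 ≠ 0) (hb7 : b7 ≠ 0) (x y z w : ZMod p × ZMod p) :
    emul a3 a8 b2 b7 (emul a3 a8 b2 b7 x y) (emul a3 a8 b2 b7 z w) =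
      emul a3 a8 b2 b7 (emul a3 a8 b2 b7 x z) (emul a3 a8 b2 b7 y w) := by
  set c1 : ZMod p := a3 * (a8 * b2 - b7) / (a8 * b7) with hc1
  set c2 : ZMod p := a8 * b2 / b7 with hc2
  set c3 : ZMod p := -(b2 * (a8 - a3 * b7)) / (a8 * b7) with hc3
  set c4 : ZMod p := a3 * b7 / a8 with hc4
  have hE : ∀ u v : ZMod p × ZMod p, emul a3 a8 b2 b7 u v =
      (c1 + a3 * u.2 + c2 * v.1 + a8 * u.2 * v.1,
       c3 + c4 * v.2 + b2 * u.1 + b7 * u.1 * v.2) := by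
    intro u v
    simp only [emul, hc1, hc2, hc3, hc4, Prod.mk.injEq]
    constructor <;> ring
  have h1 : a3 + a8 * c1 = a3 * c2 := by rw [hc1, hc2]; field_simp; ring
  have h2 : c2 + a8 * c3 = c2 * c4 := by rw [hc2, hc3, hc4]; field_simp; ring
  have h3 : b7 * c2 = a8 * b2 := by rw [hc2]; field_simp
  have h4 : b2 + b7 * c3 = b2 * c4 := by rw [hc3, hc4]; field_simp; ring
  have h5 : c4 + b7 * c1 = c4 * c2 := by rw [hc1, hc2, hc4]; field_simp; ring
  have h6 : a8 * c4 = a3 * b7 := by rw [hc4]; field_simp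
  simp only [hE, Prod.mk.injEq]
  constructor
  · linear_combination (y.2 - z.2) * ((c4 + b7 * x.1) * h1 - (a3 + a8 * w.1) * h2
      + x.1 * (a3 + a8 * w.1) * h3)
  · linear_combination (z.1 - y.1) * ((b2 + b7 * w.2) * h5 - (c2 + a8 * x.2) * h4
      - x.2 * (b2 + b7 * w.2) * h6)
end

section
/- The element 1_* = (1/b7 - a3/a8, 1/a8 - b2/b7) is a left unit for the groupoid (F_p × F_p, *): for all x, 1_* * x = x. -/
theorem entropoid_left_unit {p : ℕ} [Fact p.Prime] (a3 a8 b2 b7 : ZMod p)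
    (ha8 : a8 ≠ 0) (hb7 : b7 ≠ 0) (x : ZMod p × ZMod p) :
    emul a3 a8 b2 b7 (1 / b7 - a3 / a8, 1 / a8 - b2 / b7) x = x := by
  unfold emul
  obtain ⟨x1, x2⟩ := x
  have hA : a8 ^ 4 * a8⁻¹ ^ 4 = 1 := by
    rw [← mul_pow, mul_inv_cancel₀ ha8, one_pow]
  have hB : b7 ^ 3 * b7⁻¹ ^ 3 = 1 := by
    rw [← mul_pow, mul_inv_cancel₀ hb7, one_pow]
  apply Prod.ext <;> simp only <;> field_simp <;>
    first
    | ring1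
    | linear_combination x2 * b7 ^ 3 * b7⁻¹ ^ 3 * hA + x2 * hB
end

section
/- For every x = (x1, x2) in F_p × F_p with b2 + b7·x2 ≠ 0 and a3 + a8·x1 ≠ 0, the element x⁻¹ = ((1 - a3 b2 - a3 b7 x2)/(a8(b2 + b7 x2)), (1 - a3 b2 - a8 b2 x1)/(b7(a3 + a8 x1))) satisfies x * x⁻¹ = x⁻¹ * x = 1_*, where 1_* = (1/b7 - a3/a8, 1/a8 - b2/b7). -/
section Chart

variable {K : Type*} [Field K] {a3 a8 b2 b7 : K}

def entropoidChart (a3 a8 b2 b7 : K) (x : K × K) : K × K :=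
  (a3 + a8 * x.1, b2 + b7 * x.2)

theorem entropoidChart_injective (ha8 : a8 ≠ 0) (hb7 : b7 ≠ 0) :
    Function.Injective (entropoidChart a3 a8 b2 b7) := by
  rintro ⟨x1, x2⟩ ⟨y1, y2⟩ h
  simp only [entropoidChart, Prod.mk.injEq, add_right_inj, mul_right_inj' ha8,
    mul_right_inj' hb7] at h
  rw [h.1, h.2]

theorem entropoidChart_unit (ha8 : a8 ≠ 0) (hb7 : b7 ≠ 0) :
    entropoidChart a3 a8 b2 b7 (1 / b7 - a3 / a8, 1 / a8 - b2 / b7) = (a8 / b7, b7 / a8) := by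
  simp only [entropoidChart, Prod.mk.injEq]
  constructor <;> field_simp <;> ring

theorem entropoidChart_inverse (ha8 : a8 ≠ 0) (hb7 : b7 ≠ 0) (x : K × K)
    (hx2 : b2 + b7 * x.2 ≠ 0) (hx1 : a3 + a8 * x.1 ≠ 0) :
    entropoidChart a3 a8 b2 b7
        ((1 - a3 * b2 - a3 * b7 * x.2) / (a8 * (b2 + b7 * x.2)),
         (1 - a3 * b2 - a8 * b2 * x.1) / (b7 * (a3 + a8 * x.1)))
      = ((entropoidChart a3 a8 b2 b7 x).2⁻¹, (entropoidChart a3 a8 b2 b7 x).1⁻¹) := by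
  simp only [entropoidChart, Prod.mk.injEq]
  constructor <;> field_simp <;> ring

end Chart

theorem entropoidChart_emul {p : ℕ} [Fact p.Prime] {a3 a8 b2 b7 : ZMod p}
    (ha8 : a8 ≠ 0) (hb7 : b7 ≠ 0) (x y : ZMod p × ZMod p) :
    entropoidChart a3 a8 b2 b7 (emul a3 a8 b2 b7 x y)
      = (a8 / b7 * (entropoidChart a3 a8 b2 b7 x).2 * (entropoidChart a3 a8 b2 b7 y).1,
         b7 / a8 * (entropoidChart a3 a8 b2 b7 x).1 * (entropoidChart a3 a8 b2 b7 y).2) := by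
  simp only [entropoidChart, emul, Prod.mk.injEq]
  constructor <;> field_simp <;> ring

theorem entropoid_inverse {p : ℕ} [Fact p.Prime] (a3 a8 b2 b7 : ZMod p)
    (ha8 : a8 ≠ 0) (hb7 : b7 ≠ 0) (x : ZMod p × ZMod p)
    (hx2 : b2 + b7 * x.2 ≠ 0) (hx1 : a3 + a8 * x.1 ≠ 0) :
    emul a3 a8 b2 b7 x
        ((1 - a3 * b2 - a3 * b7 * x.2) / (a8 * (b2 + b7 * x.2)),
         (1 - a3 * b2 - a8 * b2 * x.1) / (b7 * (a3 + a8 * x.1)))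
      = (1 / b7 - a3 / a8, 1 / a8 - b2 / b7) ∧
    emul a3 a8 b2 b7
        ((1 - a3 * b2 - a3 * b7 * x.2) / (a8 * (b2 + b7 * x.2)),
         (1 - a3 * b2 - a8 * b2 * x.1) / (b7 * (a3 + a8 * x.1))) x
      = (1 / b7 - a3 / a8, 1 / a8 - b2 / b7) := by
  have hu : (entropoidChart a3 a8 b2 b7 x).1 ≠ 0 := hx1
  have hv : (entropoidChart a3 a8 b2 b7 x).2 ≠ 0 := hx2
  constructor <;> apply entropoidChart_injective ha8 hb7 <;>
    rw [entropoidChart_emul ha8 hb7, entropoidChart_inverse ha8 hb7 x hx2 hx1,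
      entropoidChart_unit ha8 hb7] <;>
    simp only [Prod.mk.injEq] <;> constructor <;> field_simp
end

section
/- The entropoid multiplication * is left and right distributive over the addition ⊞: for all x, y, z in F_p × F_p, x * (y ⊞ z) = (x*y) ⊞ (x*z) and (x ⊞ y) * z = (x*z) ⊞ (y*z). -/
/-- The entropoid addition on `F_p × F_p`. -/
def eadd {p : ℕ} [Fact p.Prime] (a3 a8 b2 b7 : ZMod p)
    (x y : ZMod p × ZMod p) : ZMod p × ZMod p :=
  (x.1 + y.1 + a3 / a8, x.2 + y.2 + b2 / b7)

theorem entropoid_distrib {p : ℕ} [Fact p.Prime] (a3 a8 b2 b7 : ZMod p)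
    (ha8 : a8 ≠ 0) (hb7 : b7 ≠ 0) (x y z : ZMod p × ZMod p) :
    emul a3 a8 b2 b7 x (eadd a3 a8 b2 b7 y z) =
      eadd a3 a8 b2 b7 (emul a3 a8 b2 b7 x y) (emul a3 a8 b2 b7 x z) ∧
    emul a3 a8 b2 b7 (eadd a3 a8 b2 b7 x y) z =
      eadd a3 a8 b2 b7 (emul a3 a8 b2 b7 x z) (emul a3 a8 b2 b7 y z) := by
  have hu : a8 * a8⁻¹ = 1 := mul_inv_cancel₀ ha8
  have hv : b7 * b7⁻¹ = 1 := mul_inv_cancel₀ hb7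
  refine ⟨Prod.ext ?_ ?_, Prod.ext ?_ ?_⟩ <;> simp only [emul, eadd, div_eq_mul_inv]
  · linear_combination (a3 * x.2) * hu + (a3 * a8⁻¹) * hv
  · linear_combination (b2 * b7⁻¹) * hu + (b2 * x.1) * hv
  · linear_combination (-(a3 * b2 * b7⁻¹)) * hu + (a3 * a8⁻¹) * hv
  · linear_combination (b2 * b7⁻¹) * hu + (-(b2 * a3 * a8⁻¹)) * hv
end

section
/- In the groupoid (F_p × F_p, *), the number of square roots of the left unit is exactly p - 1, i.e., the set S(p) = { x ∈ F_p × F_p : x * x = 1_* } has cardinality p - 1, where 1_* = (1/b7 - a3/a8, 1/a8 - b2/b7). -/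
def unitsEquivMulEqOne (M : Type*) [CommMonoid M] : Mˣ ≃ {x : M × M // x.1 * x.2 = 1} :=
  (unitsEquivProdSubtype M).trans <|
    Equiv.subtypeEquivRight fun x => by rw [mul_comm x.2, and_self]

section

variable {K : Type*} [Field K]

def affineEquiv {a : K} (ha : a ≠ 0) (b : K) : K ≃ K :=
  (Equiv.mulLeft₀ a ha).trans (Equiv.addRight b)

variable (a3 b2 : K) {a8 b7 : K}

theorem emul_diag_fst (ha8 : a8 ≠ 0) (hb7 : b7 ≠ 0) (x1 x2 : K) :
    a3 * (a8 * b2 - b7) / (a8 * b7) + a3 * x2 + a8 * b2 * x1 / b7 + a8 * x2 * x1 =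
      ((a8 * x1 + a3) * (b7 * x2 + b2) - 1) / b7 + (1 / b7 - a3 / a8) := by
  field_simp
  ring

theorem emul_diag_snd (ha8 : a8 ≠ 0) (hb7 : b7 ≠ 0) (x1 x2 : K) :
    -(b2 * (a8 - a3 * b7)) / (a8 * b7) + a3 * b7 * x2 / a8 + b2 * x1 + b7 * x1 * x2 =
      ((a8 * x1 + a3) * (b7 * x2 + b2) - 1) / a8 + (1 / a8 - b2 / b7) := by
  field_simp
  ring

end

theorem emul_self_eq_iff {p : ℕ} [Fact p.Prime] {a3 a8 b2 b7 : ZMod p} (ha8 : a8 ≠ 0)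
    (hb7 : b7 ≠ 0) (x : ZMod p × ZMod p) :
    emul a3 a8 b2 b7 x x = (1 / b7 - a3 / a8, 1 / a8 - b2 / b7) ↔
      (a8 * x.1 + a3) * (b7 * x.2 + b2) = 1 := by
  rw [emul, Prod.ext_iff, emul_diag_fst a3 b2 ha8 hb7, emul_diag_snd a3 b2 ha8 hb7,
    add_eq_right, add_eq_right, div_eq_zero_iff, div_eq_zero_iff, sub_eq_zero]
  simp only [ha8, hb7, or_false, and_self]

theorem entropoid_card_sqrt_left_unit {p : ℕ} [Fact p.Prime] (a3 a8 b2 b7 : ZMod p)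
    (ha8 : a8 ≠ 0) (hb7 : b7 ≠ 0) :
    Fintype.card {x : ZMod p × ZMod p //
        emul a3 a8 b2 b7 x x = (1 / b7 - a3 / a8, 1 / a8 - b2 / b7)} = p - 1 := by
  let substitution := (affineEquiv ha8 a3).prodCongr (affineEquiv hb7 b2)
  have e : {x : ZMod p × ZMod p //
      emul a3 a8 b2 b7 x x = (1 / b7 - a3 / a8, 1 / a8 - b2 / b7)} ≃ (ZMod p)ˣ :=
    (substitution.subtypeEquiv (emul_self_eq_iff ha8 hb7)).trans
      (unitsEquivMulEqOne (ZMod p)).symm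
  rw [Fintype.card_congr e, ZMod.card_units_eq_totient, Nat.totient_prime Fact.out]
end

section
/- Let E* be the set of pairs (x1, x2) ∈ F_p × F_p with x1 ≠ -a3/a8 and x2 ≠ -b2/b7. Then E* is closed under *, and for all c, d ∈ E* each of the equations c * x = d and x * c = d has a unique solution x ∈ E*; that is, (E*, *) is a quasigroup of order (p-1)². -/
/-- The maximal multiplicative subset `E*`. -/
def Estar {p : ℕ} [Fact p.Prime] (a3 a8 b2 b7 : ZMod p) : Set (ZMod p × ZMod p) :=
  {x | x.1 ≠ -a3 / a8 ∧ x.2 ≠ -b2 / b7}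

section aux
variable {p : ℕ} [Fact p.Prime] (a3 a8 b2 b7 : ZMod p)

lemma key1 (ha8 : a8 ≠ 0) (hb7 : b7 ≠ 0) (x y : ZMod p × ZMod p) :
    (emul a3 a8 b2 b7 x y).1 + a3 / a8 = a8 * (x.2 + b2 / b7) * (y.1 + a3 / a8) := by
  simp only [emul]; field_simp; ring

lemma key2 (ha8 : a8 ≠ 0) (hb7 : b7 ≠ 0) (x y : ZMod p × ZMod p) :
    (emul a3 a8 b2 b7 x y).2 + b2 / b7 = b7 * (x.1 + a3 / a8) * (y.2 + b2 / b7) := by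
  simp only [emul]; field_simp; ring

lemma mem_iff (x : ZMod p × ZMod p) :
    x ∈ Estar a3 a8 b2 b7 ↔ x.1 + a3 / a8 ≠ 0 ∧ x.2 + b2 / b7 ≠ 0 := by
  simp only [Estar, Set.mem_setOf_eq, neg_div, ne_eq, eq_neg_iff_add_eq_zero]

end aux

theorem entropoid_maximal_quasigroup {p : ℕ} [Fact p.Prime] (a3 a8 b2 b7 : ZMod p)
    (ha8 : a8 ≠ 0) (hb7 : b7 ≠ 0) :
    (∀ x y, x ∈ Estar a3 a8 b2 b7 → y ∈ Estar a3 a8 b2 b7 →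
        emul a3 a8 b2 b7 x y ∈ Estar a3 a8 b2 b7) ∧
    (∀ c d, c ∈ Estar a3 a8 b2 b7 → d ∈ Estar a3 a8 b2 b7 →
        (∃! x, x ∈ Estar a3 a8 b2 b7 ∧ emul a3 a8 b2 b7 c x = d) ∧
        (∃! x, x ∈ Estar a3 a8 b2 b7 ∧ emul a3 a8 b2 b7 x c = d)) ∧
    Set.ncard (Estar a3 a8 b2 b7) = (p - 1) ^ 2 := by
  set A := a3 / a8 with hA
  set B := b2 / b7 with hB
  have hfst : ∀ x y : ZMod p × ZMod p,
      (emul a3 a8 b2 b7 x y).1 + A = a8 * (x.2 + B) * (y.1 + A) := key1 a3 a8 b2 b7 ha8 hb7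
  have hsnd : ∀ x y : ZMod p × ZMod p,
      (emul a3 a8 b2 b7 x y).2 + B = b7 * (x.1 + A) * (y.2 + B) := key2 a3 a8 b2 b7 ha8 hb7
  have hmem : ∀ x : ZMod p × ZMod p,
      x ∈ Estar a3 a8 b2 b7 ↔ x.1 + A ≠ 0 ∧ x.2 + B ≠ 0 := mem_iff a3 a8 b2 b7
  have ext_iff : ∀ u v : ZMod p × ZMod p,
      u = v ↔ u.1 + A = v.1 + A ∧ u.2 + B = v.2 + B := by
    intro u v
    constructor
    · rintro rfl; exact ⟨rfl, rfl⟩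
    · rintro ⟨h1, h2⟩; exact Prod.ext (by linear_combination h1) (by linear_combination h2)
  refine ⟨?_, ?_, ?_⟩
  · intro x y hx hy
    rw [hmem] at hx hy ⊢
    rw [hfst, hsnd]
    exact ⟨mul_ne_zero (mul_ne_zero ha8 hx.2) hy.1, mul_ne_zero (mul_ne_zero hb7 hx.1) hy.2⟩
  · intro c d hc hd
    rw [hmem] at hc hd
    obtain ⟨hc1, hc2⟩ := hc
    obtain ⟨hd1, hd2⟩ := hd
    constructor
    · refine ⟨((d.1 + A) / (a8 * (c.2 + B)) - A, (d.2 + B) / (b7 * (c.1 + A)) - B), ?_, ?_⟩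
      · have e1 : ((d.1 + A) / (a8 * (c.2 + B)) - A) + A = (d.1 + A) / (a8 * (c.2 + B)) := by ring
        have e2 : ((d.2 + B) / (b7 * (c.1 + A)) - B) + B = (d.2 + B) / (b7 * (c.1 + A)) := by ring
        constructor
        · rw [hmem]
          refine ⟨?_, ?_⟩
          · simpa [e1] using div_ne_zero hd1 (mul_ne_zero ha8 hc2)
          · simpa [e2] using div_ne_zero hd2 (mul_ne_zero hb7 hc1)
        · rw [ext_iff, hfst, hsnd]
          constructor
          · rw [show (((d.1 + A) / (a8 * (c.2 + B)) - A, (d.2 + B) / (b7 * (c.1 + A)) - B) :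
              ZMod p × ZMod p).1 = (d.1 + A) / (a8 * (c.2 + B)) - A from rfl, e1,
              mul_div_cancel₀ _ (mul_ne_zero ha8 hc2)]
          · rw [show (((d.1 + A) / (a8 * (c.2 + B)) - A, (d.2 + B) / (b7 * (c.1 + A)) - B) :
              ZMod p × ZMod p).2 = (d.2 + B) / (b7 * (c.1 + A)) - B from rfl, e2,
              mul_div_cancel₀ _ (mul_ne_zero hb7 hc1)]
      · rintro y ⟨hy, hyd⟩
        rw [ext_iff] at hyd
        rw [hfst, hsnd] at hyd
        have h1 : y.1 + A = (d.1 + A) / (a8 * (c.2 + B)) := by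
          field_simp at hyd ⊢
          linear_combination hyd.1
        have h2 : y.2 + B = (d.2 + B) / (b7 * (c.1 + A)) := by
          field_simp at hyd ⊢
          linear_combination hyd.2
        refine Prod.ext ?_ ?_
        · show y.1 = (d.1 + A) / (a8 * (c.2 + B)) - A
          linear_combination h1
        · show y.2 = (d.2 + B) / (b7 * (c.1 + A)) - B
          linear_combination h2
    · refine ⟨((d.2 + B) / (b7 * (c.2 + B)) - A, (d.1 + A) / (a8 * (c.1 + A)) - B), ?_, ?_⟩
      · have e1 : ((d.2 + B) / (b7 * (c.2 + B)) - A) + A = (d.2 + B) / (b7 * (c.2 + B)) := by ring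
        have e2 : ((d.1 + A) / (a8 * (c.1 + A)) - B) + B = (d.1 + A) / (a8 * (c.1 + A)) := by ring
        constructor
        · rw [hmem]
          refine ⟨?_, ?_⟩
          · simpa [e1] using div_ne_zero hd2 (mul_ne_zero hb7 hc2)
          · simpa [e2] using div_ne_zero hd1 (mul_ne_zero ha8 hc1)
        · rw [ext_iff, hfst, hsnd]
          constructor
          · rw [show (((d.2 + B) / (b7 * (c.2 + B)) - A, (d.1 + A) / (a8 * (c.1 + A)) - B) :
              ZMod p × ZMod p).2 = (d.1 + A) / (a8 * (c.1 + A)) - B from rfl, e2]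
            field_simp
          · rw [show (((d.2 + B) / (b7 * (c.2 + B)) - A, (d.1 + A) / (a8 * (c.1 + A)) - B) :
              ZMod p × ZMod p).1 = (d.2 + B) / (b7 * (c.2 + B)) - A from rfl, e1]
            field_simp
      · rintro y ⟨hy, hyd⟩
        rw [ext_iff] at hyd
        rw [hfst, hsnd] at hyd
        have h2 : y.2 + B = (d.1 + A) / (a8 * (c.1 + A)) := by
          field_simp at hyd ⊢
          linear_combination hyd.1
        have h1 : y.1 + A = (d.2 + B) / (b7 * (c.2 + B)) := by
          field_simp at hyd ⊢
          linear_combination hyd.2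
        refine Prod.ext ?_ ?_
        · show y.1 = (d.2 + B) / (b7 * (c.2 + B)) - A
          linear_combination h1
        · show y.2 = (d.1 + A) / (a8 * (c.1 + A)) - B
          linear_combination h2
  · have hset : Estar a3 a8 b2 b7 =
        ({-a3 / a8}ᶜ : Set (ZMod p)) ×ˢ ({-b2 / b7}ᶜ : Set (ZMod p)) := by
      ext x
      simp [Estar, Set.mem_prod]
    have hcard : ∀ α : ZMod p, ({α}ᶜ : Set (ZMod p)).ncard = p - 1 := by
      intro α
      have h := Set.ncard_add_ncard_compl ({α} : Set (ZMod p))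
      rw [Set.ncard_singleton] at h
      have hp : Nat.card (ZMod p) = p := by
        simp [Nat.card_eq_fintype_card, ZMod.card]
      omega
    rw [hset, ← Nat.card_coe_set_eq, Nat.card_congr (Equiv.Set.prod _ _), Nat.card_prod,
      Nat.card_coe_set_eq, Nat.card_coe_set_eq, hcard, hcard, sq]
end

section
/- In the entropoid over F_p with parameters a3, a8, b2, b7 (a8, b7 nonzero), for every element g = (g1, g2) one has (g*((g*g)*g)) = ((g*g)*(g*g)) = (((g*g)*g)*g), and this common value equals the explicit pair ((a8³ g1² (b7 g2 + b2)² + 2 a3 a8² g1 (b7 g2 + b2)² + a3(2 a3 a8 b7 b2 g2 + a3 a8 b7² g2² + a3 a8 b2² - b7))/(a8 b7), (a3² b7³ g2² + 2 a3² b2 b7² g2 + a8² b7 g1² (b7 g2 + b2)² + 2 a3 a8 b7 g1 (b7 g2 + b2)² + b2(a3² b2 b7 - a8))/(a8 b7)). -/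
set_option maxHeartbeats 4000000


theorem entropoid_fourth_power_explicit {p : ℕ} [Fact p.Prime] (a3 a8 b2 b7 : ZMod p)
    (ha8 : a8 ≠ 0) (hb7 : b7 ≠ 0) (g : ZMod p × ZMod p) :
    emul a3 a8 b2 b7 g (emul a3 a8 b2 b7 (emul a3 a8 b2 b7 g g) g) =
      emul a3 a8 b2 b7 (emul a3 a8 b2 b7 g g) (emul a3 a8 b2 b7 g g) ∧
    emul a3 a8 b2 b7 (emul a3 a8 b2 b7 g g) (emul a3 a8 b2 b7 g g) =
      emul a3 a8 b2 b7 (emul a3 a8 b2 b7 (emul a3 a8 b2 b7 g g) g) g ∧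
    emul a3 a8 b2 b7 g (emul a3 a8 b2 b7 (emul a3 a8 b2 b7 g g) g) =
      ((a8 ^ 3 * g.1 ^ 2 * (b7 * g.2 + b2) ^ 2 + 2 * a3 * a8 ^ 2 * g.1 * (b7 * g.2 + b2) ^ 2 +
          a3 * (2 * a3 * a8 * b7 * b2 * g.2 + a3 * a8 * b7 ^ 2 * g.2 ^ 2 + a3 * a8 * b2 ^ 2 - b7))
          / (a8 * b7),
       (a3 ^ 2 * b7 ^ 3 * g.2 ^ 2 + 2 * a3 ^ 2 * b2 * b7 ^ 2 * g.2 +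
          a8 ^ 2 * b7 * g.1 ^ 2 * (b7 * g.2 + b2) ^ 2 +
          2 * a3 * a8 * b7 * g.1 * (b7 * g.2 + b2) ^ 2 + b2 * (a3 ^ 2 * b2 * b7 - a8))
          / (a8 * b7)) := by
  refine ⟨?_, ?_, ?_⟩ <;> refine Prod.ext ?_ ?_ <;> simp only [emul]
  · linear_combination ((-1)*a3*b7*b7⁻¹*g.2 + a3*b7^2*b7⁻¹*g.1*g.2 + a3*b2*b7⁻¹ + a3*b2*b7*b7⁻¹*g.1 + (-1)*a3*b2*b7*b7⁻¹^2 + a3*a8*b2*b7⁻¹*g.2 + (-1)*a3*a8*b2*b7*b7⁻¹*g.1*g.2 + (-1)*a3*a8*b2*b7*a8⁻¹*b7⁻¹^2 + (-1)*a3*a8*b2^2*b7⁻¹*g.1 + a3*a8^2*b2^2*a8⁻¹*b7⁻¹^2 + a3^2*b7^2*a8⁻¹*b7⁻¹*g.2 + a3^2*b2*b7^2*a8⁻¹*b7⁻¹^2 + (-1)*a3^2*a8*b2*b7*a8⁻¹*b7⁻¹*g.2 + (-1)*a3^2*a8*b2^2*b7*a8⁻¹*b7⁻¹^2) * (mul_inv_cancel₀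 ha8) + ((-1)*a3*g.2 + a3*b7*g.1*g.2 + a3*b2*g.1 + (-1)*a3*b2*b7⁻¹ + a3^2*b7*a8⁻¹*g.2 + a3^2*b2*b7*a8⁻¹*b7⁻¹) * (mul_inv_cancel₀ hb7)
  · linear_combination ((-1)*b2*b7*b7⁻¹*g.1 + a8*b2*b7*b7⁻¹*g.1*g.2 + a8*b2^2*b7*b7⁻¹^2*g.1 + a3*b2*b7*g.1*g.2 + a3*b2*b7*b7⁻¹*g.2 + (-1)*a3*b2*b7^2*b7⁻¹*g.1*g.2 + (-1)*a3*b2*b7^2*a8⁻¹*b7⁻¹^2 + (-1)*a3*b2^2*b7⁻¹ + a3*b2^2*b7*b7⁻¹*g.1 + a3*b2^2*b7*b7⁻¹^2 + (-1)*a3*b2^2*b7^2*b7⁻¹^2*g.1 + a3*a8*b2^2*b7*a8⁻¹*b7⁻¹^2 + a3^2*b2^2*b7*a8⁻¹*b7⁻¹ + (-1)*a3^2*b2^2*b7^2*a8⁻¹*b7⁻¹^2) * (mul_inv_cancel₀ ha8) + ((-1)*b2*g.1 + a8*b2*g.1*g.2 + a8*b2^2*b7⁻¹*g.1 + a3*b2*g.2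 + (-1)*a3*b2*b7*g.1*g.2 + a3*b2*b7*a8⁻¹*g.1 + (-1)*a3*b2*b7*a8⁻¹*b7⁻¹ + a3*b2^2*b7⁻¹ + (-1)*a3*b2^2*b7*b7⁻¹*g.1 + (-1)*a3^2*b2*b7*a8⁻¹*g.2 + a3^2*b2*b7^2*a8⁻¹^2*b7⁻¹ + (-1)*a3^2*b2^2*b7*a8⁻¹*b7⁻¹) * (mul_inv_cancel₀ hb7)
  · linear_combination (a8*b2*b7⁻¹*g.1 + (-1)*a8^2*b2*b7⁻¹*g.1*g.2 + (-1)*a8^2*b2^2*b7⁻¹^2*g.1 + (-1)*a3*b7*g.1*g.2 + (-1)*a3*b2*b7*b7⁻¹*g.1 + a3*a8*b7*g.1*g.2^2 + (-1)*a3*a8*b2*b7⁻¹*g.2 + (2)*a3*a8*b2*b7*b7⁻¹*g.1*g.2 + a3*a8*b2*b7*a8⁻¹*b7⁻¹^2 + a3*a8*b2^2*b7*b7⁻¹^2*g.1 + (-1)*a3*a8^2*b2^2*a8⁻¹*b7⁻¹^2 + a3^2*b7*g.2^2 + (-1)*a3^2*b7^2*a8⁻¹*b7⁻¹*g.2 +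 a3^2*b2*b7*b7⁻¹*g.2 + (-1)*a3^2*b2*b7^2*a8⁻¹*b7⁻¹^2 + (-1)*a3^2*b2^2*b7⁻¹ + a3^2*b2^2*b7*b7⁻¹^2 + a3^2*a8*b2*b7*a8⁻¹*b7⁻¹*g.2 + a3^2*a8*b2^2*b7*a8⁻¹*b7⁻¹^2) * (mul_inv_cancel₀ ha8) + ((-1)*a3*b2*g.1 + a3*a8*b2*g.1*g.2 + a3*a8*b2^2*b7⁻¹*g.1 + a3^2*b2*g.2 + (-1)*a3^2*b2*b7*a8⁻¹*b7⁻¹ + a3^2*b2^2*b7⁻¹) * (mul_inv_cancel₀ hb7)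
  · linear_combination (a8*b2^2*b7⁻¹*g.1 + (-1)*a8*b2^2*b7*b7⁻¹^2*g.1 + (-1)*a3*b2*b7*g.1*g.2 + (-1)*a3*b2*b7*b7⁻¹*g.2 + (-1)*a3*b2*b7*a8⁻¹*b7⁻¹ + (2)*a3*b2*b7^2*b7⁻¹*g.1*g.2 + a3*b2*b7^2*a8⁻¹*b7⁻¹^2 + a3*b2^2*b7⁻¹ + (-1)*a3*b2^2*b7*b7⁻¹^2 + a3*b2^2*b7^2*b7⁻¹^2*g.1 + (-1)*a3*a8*b2^2*b7*a8⁻¹*b7⁻¹^2 + a3^2*b2*b7^2*a8⁻¹*b7⁻¹*g.2 + a3^2*b2^2*b7^2*a8⁻¹*b7⁻¹^2) * (mul_inv_cancel₀ ha8) + ((-1)*a8*b2*g.1*g.2 + a8*b2*b7*g.1^2*g.2 + a8*b2^2*g.1^2 + (-1)*a8*b2^2*b7⁻¹*g.1 + a3*b7*a8⁻¹*g.2 + (-1)*a3*b7^2*a8⁻¹*g.1*g.2 + (-1)*a3*b2*g.2 + (2)*a3*b2*b7*g.1*g.2 + (-1)*a3*b2*b7*a8⁻¹*g.1 + a3*b2*b7*a8⁻¹*b7⁻¹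 + a3*b2^2*g.1 + (-1)*a3*b2^2*b7⁻¹ + a3*b2^2*b7*b7⁻¹*g.1 + (-1)*a3^2*b7^2*a8⁻¹^2*g.2 + a3^2*b2*b7*a8⁻¹*g.2 + (-1)*a3^2*b2*b7^2*a8⁻¹^2*b7⁻¹ + a3^2*b2^2*b7*a8⁻¹*b7⁻¹) * (mul_inv_cancel₀ hb7)
  · linear_combination ((-1)*a8^2*b7^2*b7⁻¹*g.1^2*g.2^2 + (-1)*a8^2*b2*b7⁻¹*g.1*g.2 + (-2)*a8^2*b2*b7*b7⁻¹*g.1^2*g.2 + (-1)*a8^2*b2^2*b7⁻¹*g.1^2 + (-1)*a8^2*b2^2*b7⁻¹^2*g.1 + (-1)*a3*b7*b7⁻¹*g.2 + a3*b2*b7⁻¹ + (-1)*a3*b2*b7*b7⁻¹^2 + a3*a8*b7*g.1*g.2^2 + (-2)*a3*a8*b7^2*b7⁻¹*g.1*g.2^2 + (-2)*a3*a8*b2*b7*b7⁻¹*g.1*g.2 + (-2)*a3*a8*b2^2*b7⁻¹*g.1 + a3*a8*b2^2*b7*b7⁻¹^2*g.1 + a3^2*b7*g.2^2 + (-1)*a3^2*b7^2*b7⁻¹*g.2^2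 + (-1)*a3^2*b2^2*b7⁻¹ + a3^2*b2^2*b7*b7⁻¹^2) * (mul_inv_cancel₀ ha8) + ((-1)*a8^2*b7*g.1^2*g.2^2 + (-1)*a8^2*b2*g.1^2*g.2 + (-1)*a3*g.2 + (-1)*a3*b2*b7⁻¹ + (-2)*a3*a8*b7*g.1*g.2^2 + (-1)*a3*a8*b2*g.1*g.2 + a3*a8*b2^2*b7⁻¹*g.1 + (-1)*a3^2*b7*g.2^2 + a3^2*b2^2*b7⁻¹) * (mul_inv_cancel₀ hb7)
  · linear_combination ((-1)*b2*b7*b7⁻¹*g.1 + (-1)*a8*b7^3*b7⁻¹*g.1^2*g.2^2 + (-2)*a8*b2*b7^2*b7⁻¹*g.1^2*g.2 + (-1)*a8*b2^2*b7*b7⁻¹*g.1^2 + a3*b7^2*g.1*g.2^2 + (-2)*a3*b7^3*b7⁻¹*g.1*g.2^2 + a3*b2*b7*g.1*g.2 + (-1)*a3*b2*b7*a8⁻¹*b7⁻¹ + (-2)*a3*b2*b7^2*b7⁻¹*g.1*g.2 + a3^2*b2*b7^2*a8⁻¹*b7⁻¹*g.2 + a3^2*b2^2*b7*a8⁻¹*b7⁻¹)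 * (mul_inv_cancel₀ ha8) + ((-1)*b2*g.1 + (-1)*a8*b7^2*g.1^2*g.2^2 + (-1)*a8*b2*b7*g.1^2*g.2 + (-2)*a3*b7^2*g.1*g.2^2 + (-1)*a3*b7^2*a8⁻¹*g.1*g.2 + (-2)*a3*b2*b7*g.1*g.2 + (-1)*a3^2*b7^2*a8⁻¹*g.2^2 + (-1)*a3^2*b7^2*a8⁻¹^2*g.2 + (-1)*a3^2*b2*b7*a8⁻¹*g.2) * (mul_inv_cancel₀ hb7)
end

section
/- In any entropic groupoid, powers commute in the palintropic sense: for any two bracketing shapes A and B and any x, (x^A)^B = (x^B)^A, where x^A denotes the evaluation of the binary tree A with all leaves equal to x, and (x^A)^B denotes the evaluation of tree B with all leaves equal to x^A. -/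
/-- A bracketing shape: a full binary tree. -/
inductive BShape where
  | leaf : BShape
  | node : BShape → BShape → BShape

/-- Evaluation of a bracketing shape with all leaves equal to `x`, under `m`. -/
def BShape.eval {G : Type*} (m : G → G → G) (x : G) : BShape → G
  | .leaf => x
  | .node l r => m (l.eval m x) (r.eval m x)

/-- Number of leaves of a bracketing shape. -/
def BShape.leaves : BShape → ℕ
  | .leaf => 1
  | .node l r => l.leaves + r.leaves

lemma eval_mul {G : Type*} (m : G → G → G)
    (hmed : ∀ x y z w, m (m x y) (m z w) = m (m x z) (m y w))
    (A : BShape) (x y : G) :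
    A.eval m (m x y) = m (A.eval m x) (A.eval m y) := by
  induction A with
  | leaf => rfl
  | node l r ihl ihr =>
    simp only [BShape.eval, ihl, ihr]
    exact hmed _ _ _ _

theorem entropic_palintropic {G : Type*} (m : G → G → G)
    (hmed : ∀ x y z w, m (m x y) (m z w) = m (m x z) (m y w))
    (A B : BShape) (x : G) :
    B.eval m (A.eval m x) = A.eval m (B.eval m x) := by
  induction B with
  | leaf => rfl
  | node l r ihl ihr =>
    simp only [BShape.eval, ihl, ihr]
    exact (eval_mul m hmed A _ _).symm
end

section
/- For the entropoid over F_p with parameters a3 = 0, a8 = 1, b2 = 0, b7 = 1, the operation * reduces to (x1, x2) * (y1, y2) = (x2·y1, x1·y2); consequently, for every γ ∈ F_p* and every natural number n ≥ 1, any n-fold *-product of the element g = (γ, γ) (with any bracketing) equals (γ^n, γ^n). -/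
theorem entropoid_dlp_reduction {p : ℕ} [Fact p.Prime] :
    (∀ x y : ZMod p × ZMod p,
        emul (0 : ZMod p) 1 0 1 x y = (x.2 * y.1, x.1 * y.2)) ∧
    ∀ γ : ZMod p, γ ≠ 0 → ∀ t : BShape,
        t.eval (emul (0 : ZMod p) 1 0 1) (γ, γ) = (γ ^ t.leaves, γ ^ t.leaves) := by
  have h : ∀ x y : ZMod p × ZMod p,
      emul (0 : ZMod p) 1 0 1 x y = (x.2 * y.1, x.1 * y.2) := by
    intro x y
    simp [emul]
  refine ⟨h, fun γ hγ t => ?_⟩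
  induction t with
  | leaf => simp [BShape.eval, BShape.leaves]
  | node l r hl hr =>
      simp [BShape.eval, BShape.leaves, h, hl, hr, pow_add, mul_comm]
end
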